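/- arXiv:2004.06264 — 8 statements merged into one kernel-verified Lean document; each statement's English description precedes it below -/
import Mathlib

section
/- Let M > 0 and 0 < r < 1/(Me). Then the function g(x) = M·e^(rx) − x has exactly two real zeros λ and μ, and they satisfy 0 < λ < Me < 1/r < μ. -/
/-! `g` is strictly convex, so it takes the value `0` at most twice. It is positive at `0` and far
to the right, and negative at `M e` and at `1 / r` (because `r M e < 1`), so the intermediate value
theorem places one zero in `(0, M e)` and another beyond `1 / r`. -/

open Real Set

theorem StrictConvexOn.comp_const_mul {f : ℝ → ℝ} (hf : StrictConvexOn ℝ univ f) {c : ℝ}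
    (hc : c ≠ 0) : StrictConvexOn ℝ univ fun x => f (c * x) := by
  refine ⟨convex_univ, fun x _ y _ hxy a b ha hb hab => ?_⟩
  have hcxy : c * x ≠ c * y := fun h => hxy (mul_left_cancel₀ hc h)
  have h := hf.2 (mem_univ _) (mem_univ _) hcxy ha hb hab
  simp only [smul_eq_mul] at h ⊢
  rwa [show c * (a * x + b * y) = a * (c * x) + b * (c * y) by ring]

theorem StrictConvexOn.const_mul {E : Type*} [AddCommMonoid E] [Module ℝ E] {s : Set E}
    {f : E → ℝ} (hf : StrictConvexOn ℝ s f) {c : ℝ} (hc : 0 < c) :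
    StrictConvexOn ℝ s fun x => c * f x := by
  refine ⟨hf.1, fun x hx y hy hxy a b ha hb hab => ?_⟩
  have h := mul_lt_mul_of_pos_left (hf.2 hx hy hxy ha hb hab) hc
  simp only [smul_eq_mul] at h ⊢
  linarith

theorem StrictConvexOn.eq_or_eq_of_map_eq {s : Set ℝ} {f : ℝ → ℝ}
    (hf : StrictConvexOn ℝ s f) {a b x : ℝ} (ha : a ∈ s) (hb : b ∈ s) (hx : x ∈ s)
    (hab : a < b) (hfab : f a = f b) (hfx : f x = f a) : x = a ∨ x = b := by
  have mid_lt_max : ∀ {u v w}, u ∈ s → w ∈ s → u < v → v < w → f v < max (f u) (f w) :=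
    fun hu hw huv hvw => hf.lt_on_openSegment hu hw (huv.trans hvw).ne
      (Ioo_subset_openSegment ⟨huv, hvw⟩)
  by_contra! hne
  rcases lt_or_gt_of_ne hne.1 with hxa | hax
  · have := mid_lt_max hx hb hxa hab
    simp only [hfx, hfab, max_self, lt_irrefl] at this
  rcases lt_or_gt_of_ne hne.2 with hxb | hbx
  · have := mid_lt_max ha hb hax hxb
    simp only [hfx, hfab, max_self, lt_irrefl] at this
  · have := mid_lt_max ha hx hab hbx
    simp only [hfx, hfab, max_self, lt_irrefl] at this

theorem lt_mul_exp_mul_of_two_div_le {M r x : ℝ} (hM : 0 < M) (hr : 0 < r)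
    (hxM : 2 / (M * r ^ 2) ≤ x) : x < M * exp (r * x) := by
  have hx : 0 < x := (by positivity : 0 < 2 / (M * r ^ 2)).trans_le hxM
  have hquad : (r * x) ^ 2 / 2 < exp (r * x) := by
    have hrx : 0 < r * x := mul_pos hr hx
    nlinarith [quadratic_le_exp_of_nonneg hrx.le]
  have hx_le : x ≤ M * ((r * x) ^ 2 / 2) := by
    have : 2 ≤ M * r ^ 2 * x := by rwa [div_le_iff₀' (by positivity)] at hxM
    nlinarith
  calc x ≤ M * ((r * x) ^ 2 / 2) := hx_le
    _ < M * exp (r * x) := mul_lt_mul_of_pos_left hquad hM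

theorem stmt_0 (M r : ℝ) (hM : 0 < M) (hr : 0 < r) (hre : r < 1 / (M * Real.exp 1)) :
    ∃ lam mu : ℝ,
      M * Real.exp (r * lam) - lam = 0 ∧
      M * Real.exp (r * mu) - mu = 0 ∧
      0 < lam ∧ lam < M * Real.exp 1 ∧ M * Real.exp 1 < 1 / r ∧ 1 / r < mu ∧
      ∀ x : ℝ, M * Real.exp (r * x) - x = 0 → x = lam ∨ x = mu := by
  set g : ℝ → ℝ := fun x => M * exp (r * x) - x
  have hMe : 0 < M * exp 1 := by positivity
  have hMe_lt : M * exp 1 < 1 / r := (lt_one_div hMe hr).2 hre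
  have hcont : Continuous g := by fun_prop
  have hg_zero : 0 < g 0 := by simp [g, hM]
  have hg_Me : g (M * exp 1) < 0 := by
    have : exp (r * (M * exp 1)) < exp 1 := exp_lt_exp.2 ((lt_div_iff₀ hMe).1 hre)
    have := mul_lt_mul_of_pos_left this hM
    simp only [g]; linarith
  have hg_inv : g (1 / r) < 0 := by
    simp only [g, mul_one_div_cancel hr.ne']; linarith
  set X := 2 / (M * r ^ 2) + 1 / r
  have hX : 1 / r < X := lt_add_of_pos_left _ (by positivity)
  have hg_X : 0 < g X := sub_pos.2 <|
    lt_mul_exp_mul_of_two_div_le hM hr (le_add_of_nonneg_right (by positivity))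
  obtain ⟨lam, ⟨hlam_pos, hlam_lt⟩, hlam⟩ :=
    intermediate_value_Ioo' hMe.le hcont.continuousOn ⟨hg_Me, hg_zero⟩
  obtain ⟨mu, ⟨hmu_gt, -⟩, hmu⟩ :=
    intermediate_value_Ioo hX.le hcont.continuousOn ⟨hg_inv, hg_X⟩
  have hg_convex : StrictConvexOn ℝ univ g :=
    ((strictConvexOn_exp.comp_const_mul hr.ne').const_mul hM).sub_concaveOn
      (concaveOn_id convex_univ)
  refine ⟨lam, mu, hlam, hmu, hlam_pos, hlam_lt, hMe_lt, hmu_gt, fun x hx => ?_⟩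
  exact hg_convex.eq_or_eq_of_map_eq (mem_univ _) (mem_univ _) (mem_univ _) (by linarith)
    (hlam.trans hmu.symm) (hx.trans hlam.symm)
end

section
/- Let r > 0, c₂ > 0 with c₂·r < 1, and let φ : [0,∞) → [0,∞) be continuous with φ(t) ≤ c₂·∫_{t−r}^{t} φ(s) ds for all t ≥ r. Set c₁ = max_{0≤t≤r} φ(t). Then φ(t) ≤ c₁ for all t ≥ 0. -/
open Real Set

theorem stmt_3 (r c₁ c₂ : ℝ) (hr : 0 < r) (hc₂ : 0 < c₂) (hc₂r : c₂ * r < 1)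
    (φ : ℝ → ℝ) (hcont : ContinuousOn φ (Set.Ici 0)) (hpos : ∀ t ≥ (0:ℝ), 0 ≤ φ t)
    (hineq : ∀ t ≥ r, φ t ≤ c₂ * ∫ s in (t - r)..t, φ s)
    (hc₁ : IsGreatest (φ '' Set.Icc 0 r) c₁) :
    ∀ t ≥ (0:ℝ), φ t ≤ c₁ := by
  have hc₁0 : 0 ≤ c₁ := by
    obtain ⟨x, hx, hxe⟩ := hc₁.1
    rw [← hxe]; exact hpos x hx.1
  intro t ht
  by_cases htr : t ≤ r
  · exact hc₁.2 ⟨t, ⟨ht, htr⟩, rfl⟩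
  push_neg at htr
  -- max of φ on [0,t]
  have hcomp : IsCompact (Set.Icc (0:ℝ) t) := isCompact_Icc
  have hconts : ContinuousOn φ (Set.Icc 0 t) :=
    hcont.mono (fun x hx => hx.1)
  obtain ⟨u, hu, hmax⟩ := hcomp.exists_isMaxOn ⟨0, ⟨le_refl 0, ht⟩⟩ hconts
  have hφt : φ t ≤ φ u := hmax ⟨ht, le_refl t⟩
  by_cases hur : u ≤ r
  · exact hφt.trans (hc₁.2 ⟨u, ⟨hu.1, hur⟩, rfl⟩)
  push_neg at hur
  have hur' : r ≤ u := hur.le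
  have hsub : Set.uIcc (u - r) u ⊆ Set.Icc 0 t := by
    rw [Set.uIcc_of_le (by linarith)]
    intro x hx
    exact ⟨by linarith [hx.1, hr.le, hu.1], hx.2.trans hu.2⟩
  have hint : IntervalIntegrable φ MeasureTheory.volume (u - r) u :=
    (hconts.mono hsub).intervalIntegrable
  have hintc : IntervalIntegrable (fun _ => φ u) MeasureTheory.volume (u - r) u :=
    intervalIntegrable_const
  have hbound : (∫ s in (u - r)..u, φ s) ≤ ∫ _ in (u - r)..u, φ u := by
    apply intervalIntegral.integral_mono_on (by linarith) hint hintc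
    intro x hx
    exact hmax (hsub (by rwa [Set.uIcc_of_le (by linarith : u - r ≤ u)]))
  have hconstint : (∫ _ in (u - r)..u, φ u) = r * φ u := by
    rw [intervalIntegral.integral_const, smul_eq_mul]
    ring_nf
  have h1 : φ u ≤ c₂ * (r * φ u) := by
    have := hineq u hur'
    rw [hconstint] at hbound
    calc φ u ≤ c₂ * ∫ s in (u - r)..u, φ s := this
      _ ≤ c₂ * (r * φ u) := by nlinarith
  have hφu0 : φ u ≤ 0 := by nlinarith
  linarith
end

section
/- Let r > 0, c₂ > 0 with c₂·r < 1, and let φ : [0,∞) → [0,∞) be continuous with φ(t) ≤ c₂·∫_{t−r}^{t} φ(s) ds for all t ≥ r. Set c₁ = max_{0≤t≤r} φ(t). Then for every ρ ∈ (0,1] and every t ≥ 0, φ(t) ≤ (c₁/(c₂·r)^ρ)·exp((ρ·ln(c₂·r)/r)·t). -/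
/-!
Let `q = c₂ r < 1`. On `[0, T]` the maximum of `φ` is either attained in `[0, r]`, hence is at
most `c₁`, or at a point `x ≥ r`, where the delay inequality gives `φ x ≤ q φ x`, so `φ x ≤ 0`.
Thus `φ ≤ c₁` everywhere, and feeding this bound back into the delay inequality shows
`φ ≤ c₁ qⁿ` on `[n r, ∞)`. Since `ρ (t / r - 1) ≤ ⌊t / r⌋` and `q ≤ 1`, this gives the claim.
-/

open Real Set MeasureTheory

section DelayInequality

variable {φ : ℝ → ℝ} {r c₂ : ℝ}

lemma intervalIntegrable_of_continuousOn_Ici (hcont : ContinuousOn φ (Ici 0)) {a b : ℝ}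
    (ha : 0 ≤ a) (hab : a ≤ b) : IntervalIntegrable φ volume a b := by
  refine (hcont.mono ?_).intervalIntegrable
  rw [uIcc_of_le hab]
  exact fun s hs => ha.trans hs.1

lemma le_mul_of_le_on_delay_window (hc₂ : 0 ≤ c₂) (hr : 0 ≤ r) {t M : ℝ}
    (hint : IntervalIntegrable φ volume (t - r) t)
    (ht : φ t ≤ c₂ * ∫ s in (t - r)..t, φ s) (hM : ∀ s ∈ Icc (t - r) t, φ s ≤ M) :
    φ t ≤ c₂ * r * M := by
  have hmono : ∫ s in (t - r)..t, φ s ≤ ∫ _ in (t - r)..t, M :=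
    intervalIntegral.integral_mono_on (by linarith) hint intervalIntegrable_const hM
  calc φ t ≤ c₂ * ∫ s in (t - r)..t, φ s := ht
    _ ≤ c₂ * ∫ _ in (t - r)..t, M := mul_le_mul_of_nonneg_left hmono hc₂
    _ = c₂ * r * M := by
      simp only [intervalIntegral.integral_const, sub_sub_cancel, smul_eq_mul]
      ring

lemma le_of_delay_ineq_of_isGreatest (hr : 0 < r) (hc₂ : 0 ≤ c₂) (hc₂r : c₂ * r < 1)
    (hcont : ContinuousOn φ (Ici 0)) (hineq : ∀ t ≥ r, φ t ≤ c₂ * ∫ s in (t - r)..t, φ s)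
    {c₁ : ℝ} (hc₁ : IsGreatest (φ '' Icc 0 r) c₁) (hc₁0 : 0 ≤ c₁) {t : ℝ} (ht : 0 ≤ t) :
    φ t ≤ c₁ := by
  obtain ⟨x, hx, hmax⟩ := isCompact_Icc.exists_isMaxOn (nonempty_Icc.2 (le_max_of_le_left ht))
    (hcont.mono fun s hs => hs.1 : ContinuousOn φ (Icc 0 (max t r)))
  have hφx : φ x ≤ c₁ := by
    rcases le_total x r with hxr | hrx
    · exact hc₁.2 ⟨x, ⟨hx.1, hxr⟩, rfl⟩
    · have hself : φ x ≤ c₂ * r * φ x :=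
        le_mul_of_le_on_delay_window hc₂ hr.le
          (intervalIntegrable_of_continuousOn_Ici hcont (by linarith) (by linarith))
          (hineq x hrx) fun s hs => hmax ⟨by linarith [hs.1], hs.2.trans hx.2⟩
      nlinarith
  exact (hmax ⟨ht, le_max_left t r⟩).trans hφx

lemma le_mul_pow_of_delay_ineq (hr : 0 ≤ r) (hc₂ : 0 ≤ c₂) (hcont : ContinuousOn φ (Ici 0))
    (hineq : ∀ t ≥ r, φ t ≤ c₂ * ∫ s in (t - r)..t, φ s) {M : ℝ}
    (hbound : ∀ t ≥ (0 : ℝ), φ t ≤ M) (n : ℕ) {t : ℝ} (ht : n * r ≤ t) :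
    φ t ≤ M * (c₂ * r) ^ n := by
  induction n generalizing t with
  | zero => simpa using hbound t (by simpa using ht)
  | succ n ih =>
    push_cast at ht
    have hnr : 0 ≤ (n : ℝ) * r := by positivity
    calc φ t ≤ c₂ * r * (M * (c₂ * r) ^ n) :=
          le_mul_of_le_on_delay_window hc₂ hr
            (intervalIntegrable_of_continuousOn_Ici hcont (by linarith) (by linarith))
            (hineq t (by linarith)) fun s hs => ih (by linarith [hs.1])
      _ = M * (c₂ * r) ^ (n + 1) := by ring

end DelayInequality

lemma pow_floor_le_rpow_mul_sub {q ρ x : ℝ} (hq : 0 < q) (hq1 : q ≤ 1) (hρ : 0 < ρ)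
    (hρ1 : ρ ≤ 1) : q ^ ⌊x⌋₊ ≤ q ^ (ρ * x - ρ) := by
  rw [← rpow_natCast]
  refine rpow_le_rpow_of_exponent_ge hq hq1 ?_
  have hfloor := Nat.lt_floor_add_one x
  rcases le_total x 1 with h | h <;> nlinarith [(Nat.cast_nonneg ⌊x⌋₊ : (0 : ℝ) ≤ _)]

theorem stmt_4 (r c₁ c₂ : ℝ) (hr : 0 < r) (hc₂ : 0 < c₂) (hc₂r : c₂ * r < 1)
    (φ : ℝ → ℝ) (hcont : ContinuousOn φ (Set.Ici 0)) (hpos : ∀ t ≥ (0:ℝ), 0 ≤ φ t)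
    (hineq : ∀ t ≥ r, φ t ≤ c₂ * ∫ s in (t - r)..t, φ s)
    (hc₁ : IsGreatest (φ '' Set.Icc 0 r) c₁) :
    ∀ ρ : ℝ, 0 < ρ → ρ ≤ 1 → ∀ t ≥ (0:ℝ),
      φ t ≤ c₁ / (c₂ * r) ^ ρ * Real.exp (ρ * Real.log (c₂ * r) / r * t) := by
  intro ρ hρ hρ1 t ht
  have hq : 0 < c₂ * r := mul_pos hc₂ hr
  have hc₁0 : 0 ≤ c₁ := by
    obtain ⟨x, hx, rfl⟩ := hc₁.1
    exact hpos x hx.1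
  have hbound : ∀ t ≥ (0 : ℝ), φ t ≤ c₁ := fun t ht =>
    le_of_delay_ineq_of_isGreatest hr hc₂.le hc₂r hcont hineq hc₁ hc₁0 ht
  have htr : 0 ≤ t / r := by positivity
  calc φ t ≤ c₁ * (c₂ * r) ^ ⌊t / r⌋₊ :=
        le_mul_pow_of_delay_ineq hr.le hc₂.le hcont hineq hbound _
          ((mul_le_mul_of_nonneg_right (Nat.floor_le htr) hr.le).trans_eq
            (div_mul_cancel₀ t hr.ne'))
    _ ≤ c₁ * (c₂ * r) ^ (ρ * (t / r) - ρ) :=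
        mul_le_mul_of_nonneg_left (pow_floor_le_rpow_mul_sub hq hc₂r.le hρ hρ1) hc₁0
    _ = c₁ / (c₂ * r) ^ ρ * Real.exp (ρ * Real.log (c₂ * r) / r * t) := by
        rw [rpow_sub hq, rpow_def_of_pos hq]
        ring_nf
end

section
/- Let K₁, K₂ > 0 with K₁·K₂ > 1, M > α > β reals, and define Ψ(τ) = K₁⁻¹·e^(ατ) − K₂·e^(βτ) and τ₀ = ln(K₁K₂)/(α−β). Then the function Ψ̃(τ) = 2·e^(Mτ)/Ψ(τ) on (τ₀, ∞) attains its minimum at τ₁ = (ln(K₁K₂(M−β)) − ln(M−α))/(α−β), and the minimum value equals 2γK₁·(1 + 1/(γ−1))^(γ−1)·(K₁K₂)^(γ−1), where γ = (M−β)/(α−β) > 1. -/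
/-!
Substituting `x = exp ((α - β) τ)` turns `2 exp (M τ) / Ψ τ` into `2 K₁ x ^ γ / (x - K₁ K₂)` on
`x > K₁ K₂`. Bernoulli's inequality `(x / x₁) ^ γ ≥ 1 + γ (x / x₁ - 1)` at
`x₁ = K₁ K₂ γ / (γ - 1)` shows that `x₁` minimises this function, since the right-hand side is
exactly `(x - K₁ K₂) / (x₁ - K₁ K₂)`; and `x₁ = exp ((α - β) τ₁)`.
-/

open Real Set

lemma isMinOn_rpow_div_sub {c γ : ℝ} (hc : 0 < c) (hγ : 1 < γ) :
    IsMinOn (fun x => x ^ γ / (x - c)) (Ioi c) (c * (1 + 1 / (γ - 1))) := by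
  refine isMinOn_iff.2 fun x (hx : c < x) => ?_
  set x₁ := c * (1 + 1 / (γ - 1)) with hx₁
  have hγ1 : 0 < γ - 1 := sub_pos.2 hγ
  have hx₁c : x₁ - c = c / (γ - 1) := by rw [hx₁]; ring
  have hx₁c_pos : 0 < x₁ - c := by rw [hx₁c]; positivity
  have hx₁0 : 0 < x₁ := by linarith
  have hx0 : 0 < x := by linarith
  have htangent : x - c = (x₁ - c) * (1 + γ * (x / x₁ - 1)) := by
    rw [hx₁c, hx₁]; field_simp; ring
  have hbernoulli : 1 + γ * (x / x₁ - 1) ≤ x ^ γ / x₁ ^ γ := by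
    rw [← div_rpow hx0.le hx₁0.le]
    simpa using one_add_mul_self_le_rpow_one_add (s := x / x₁ - 1)
      (by linarith [div_pos hx0 hx₁0]) hγ.le
  rw [le_div_iff₀ (rpow_pos_of_pos hx₁0 γ)] at hbernoulli
  rw [div_le_div_iff₀ hx₁c_pos (by linarith), htangent]
  nlinarith

lemma rpow_div_sub_at_min {c γ : ℝ} (hc : 0 < c) (hγ : 1 < γ) :
    (c * (1 + 1 / (γ - 1))) ^ γ / (c * (1 + 1 / (γ - 1)) - c)
      = γ * (1 + 1 / (γ - 1)) ^ (γ - 1) * c ^ (γ - 1) := by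
  have hγ1 : 0 < γ - 1 := sub_pos.2 hγ
  have hq : 0 < 1 + 1 / (γ - 1) := by positivity
  rw [mul_rpow hc.le hq.le, rpow_sub_one hc.ne', rpow_sub_one hq.ne']
  field_simp
  ring

lemma exp_div_sub_exp_eq_rpow_div_sub {K₁ K₂ M α β γ τ : ℝ} (hK₁ : K₁ ≠ 0)
    (hγ : γ * (α - β) = M - β) :
    exp (M * τ) / (K₁⁻¹ * exp (α * τ) - K₂ * exp (β * τ))
      = K₁ * (exp ((α - β) * τ) ^ γ / (exp ((α - β) * τ) - K₁ * K₂)) := by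
  have hnum : exp (M * τ) = exp (β * τ) * exp ((α - β) * τ) ^ γ := by
    rw [← exp_mul, ← exp_add]; congr 1; linear_combination (-τ) * hγ
  have hden : K₁⁻¹ * exp (α * τ) - K₂ * exp (β * τ)
      = exp (β * τ) * K₁⁻¹ * (exp ((α - β) * τ) - K₁ * K₂) := by
    have hα : exp (α * τ) = exp (β * τ) * exp ((α - β) * τ) := by rw [← exp_add]; ring_nf
    rw [hα]; field_simp
  rw [hnum, hden]
  field_simp

theorem stmt_8_general (K₁ K₂ M α β : ℝ) (hK₁ : 0 < K₁) (hK₂ : 0 < K₂)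
    (hMα : α < M) (hαβ : β < α)
    (Ψ : ℝ → ℝ) (hΨ : ∀ τ, Ψ τ = K₁⁻¹ * Real.exp (α * τ) - K₂ * Real.exp (β * τ))
    (τ₀ τ₁ γ : ℝ) (hτ₀ : τ₀ = Real.log (K₁ * K₂) / (α - β))
    (hτ₁ : τ₁ = (Real.log (K₁ * K₂ * (M - β)) - Real.log (M - α)) / (α - β))
    (hγ : γ = (M - β) / (α - β)) :
    τ₀ < τ₁ ∧
    (∀ τ : ℝ, τ₀ < τ → 2 * Real.exp (M * τ₁) / Ψ τ₁ ≤ 2 * Real.exp (M * τ) / Ψ τ) ∧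
    2 * Real.exp (M * τ₁) / Ψ τ₁
      = 2 * γ * K₁ * (1 + 1 / (γ - 1)) ^ (γ - 1) * (K₁ * K₂) ^ (γ - 1) := by
  have hαβ' : 0 < α - β := sub_pos.2 hαβ
  have hMα' : 0 < M - α := sub_pos.2 hMα
  have hMβ' : 0 < M - β := by linarith
  have hc : 0 < K₁ * K₂ := mul_pos hK₁ hK₂
  have hγαβ : γ * (α - β) = M - β := by rw [hγ]; field_simp
  have hγ1 : 1 < γ := by rw [hγ, lt_div_iff₀ hαβ']; linarith
  have hΨ' (τ : ℝ) : 2 * exp (M * τ) / Ψ τ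
      = 2 * K₁ * (exp ((α - β) * τ) ^ γ / (exp ((α - β) * τ) - K₁ * K₂)) := by
    rw [mul_div_assoc, hΨ, exp_div_sub_exp_eq_rpow_div_sub hK₁.ne' hγαβ, mul_assoc]
  have hx₀ : exp ((α - β) * τ₀) = K₁ * K₂ := by
    rw [hτ₀, mul_div_cancel₀ _ hαβ'.ne', exp_log hc]
  have hq : 1 + 1 / (γ - 1) = (M - β) / (M - α) := by
    have hγ_sub_one : γ - 1 = (M - α) / (α - β) := by rw [hγ]; field_simp; ring
    rw [hγ_sub_one]; field_simp; ring
  have hx₁ : exp ((α - β) * τ₁) = K₁ * K₂ * (1 + 1 / (γ - 1)) := by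
    rw [hτ₁, mul_div_cancel₀ _ hαβ'.ne', exp_sub, exp_log (by positivity), exp_log hMα', hq,
      mul_div_assoc]
  have hx_gt (τ : ℝ) (hτ : τ₀ < τ) : K₁ * K₂ < exp ((α - β) * τ) := by
    rw [← hx₀]; gcongr
  refine ⟨?_, fun τ hτ => ?_, ?_⟩
  · have hexp_lt : exp ((α - β) * τ₀) < exp ((α - β) * τ₁) := by
      rw [hx₀, hx₁, lt_mul_iff_one_lt_right hc, lt_add_iff_pos_right, one_div_pos]
      linarith
    exact lt_of_mul_lt_mul_left (exp_lt_exp.1 hexp_lt) hαβ'.le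
  · rw [hΨ', hΨ', hx₁]
    exact mul_le_mul_of_nonneg_left
      (isMinOn_iff.1 (isMinOn_rpow_div_sub hc hγ1) _ (hx_gt τ hτ)) (by positivity)
  · rw [hΨ', hx₁, rpow_div_sub_at_min hc hγ1]
    ring

theorem stmt_8 (K₁ K₂ M α β : ℝ) (hK₁ : 0 < K₁) (hK₂ : 0 < K₂) (hKK : 1 < K₁ * K₂)
    (hMα : α < M) (hαβ : β < α)
    (Ψ : ℝ → ℝ) (hΨ : ∀ τ, Ψ τ = K₁⁻¹ * Real.exp (α * τ) - K₂ * Real.exp (β * τ))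
    (τ₀ τ₁ γ : ℝ) (hτ₀ : τ₀ = Real.log (K₁ * K₂) / (α - β))
    (hτ₁ : τ₁ = (Real.log (K₁ * K₂ * (M - β)) - Real.log (M - α)) / (α - β))
    (hγ : γ = (M - β) / (α - β)) :
    τ₀ < τ₁ ∧
    (∀ τ : ℝ, τ₀ < τ → 2 * Real.exp (M * τ₁) / Ψ τ₁ ≤ 2 * Real.exp (M * τ) / Ψ τ) ∧
    2 * Real.exp (M * τ₁) / Ψ τ₁
      = 2 * γ * K₁ * (1 + 1 / (γ - 1)) ^ (γ - 1) * (K₁ * K₂) ^ (γ - 1) :=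
  stmt_8_general K₁ K₂ M α β hK₁ hK₂ hMα hαβ Ψ hΨ τ₀ τ₁ γ hτ₀ hτ₁ hγ
end

section
/- Let P₁ be a nonzero bounded projection on a Banach space X with complementary projection P₂ = I − P₁ also nonzero, and let C₁ = R(P₁), C₂ = R(P₂). Define the separation index dist(C₁,C₂) = inf{ ‖ξ₁ − ξ₂‖ : ξ₁ ∈ C₁, ‖ξ₁‖ = 1, ξ₂ ∈ C₂ }. Then dist(C₁,C₂) = 1/‖P₁‖. -/
/-!
For `ξ₁ ∈ R(P)` and `ξ₂ ∈ R(I - P)` we have `P (ξ₁ - ξ₂) = ξ₁`, and conversely every `x` with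
`P x ≠ 0` splits as `P x - (P x - x)`. After normalising `‖ξ₁‖ = 1`, the numbers `‖ξ₁ - ξ₂‖` are
therefore exactly the ratios `‖x‖ / ‖P x‖`, whose infimum is `1 / ‖P‖` by definition of the
operator norm.
-/

open Set

namespace ContinuousLinearMap

variable {𝕜 E F : Type*} [NontriviallyNormedField 𝕜] [NormedAddCommGroup E]
  [NormedAddCommGroup F] [NormedSpace 𝕜 E] [NormedSpace 𝕜 F]

theorem sInf_norm_div_norm_apply_eq_inv_opNorm (T : E →L[𝕜] F) (hT : T ≠ 0) :
    sInf ((fun x => ‖x‖ / ‖T x‖) '' {x | T x ≠ 0}) = ‖T‖⁻¹ := by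
  have hT_pos : 0 < ‖T‖ := norm_pos_iff.mpr hT
  refine csInf_eq_of_forall_ge_of_forall_gt_exists_lt ?_ ?_ fun w hw => ?_
  · obtain ⟨x, hx⟩ := DFunLike.ne_iff.mp hT
    exact ⟨_, x, hx, rfl⟩
  · rintro - ⟨x, hx, rfl⟩
    rw [le_div_iff₀ (norm_pos_iff.mpr hx), inv_mul_le_iff₀ hT_pos]
    exact T.le_opNorm x
  · have hw_pos : 0 < w := (inv_pos.mpr hT_pos).trans hw
    obtain ⟨x, hx⟩ := T.exists_mul_lt_of_lt_opNorm (inv_nonneg.mpr hw_pos.le)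
      (inv_lt_of_inv_lt₀ hT_pos hw)
    have hTx : 0 < ‖T x‖ := (by positivity : 0 ≤ w⁻¹ * ‖x‖).trans_lt hx
    refine ⟨_, ⟨x, norm_pos_iff.mp hTx, rfl⟩, ?_⟩
    rwa [div_lt_iff₀ hTx, ← inv_mul_lt_iff₀ hw_pos]

end ContinuousLinearMap

section Projection

variable {X : Type*} [NormedAddCommGroup X] [NormedSpace ℝ X]

/-- The separation index `dist(C₁, C₂)` is the infimum of this set. -/
def unitSeparationSet (C₁ C₂ : Set X) : Set ℝ :=
  {d | ∃ ξ₁ ξ₂ : X, ξ₁ ∈ C₁ ∧ ‖ξ₁‖ = 1 ∧ ξ₂ ∈ C₂ ∧ d = ‖ξ₁ - ξ₂‖}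

variable {P : X →L[ℝ] X}

theorem apply_sub_eq_of_mem_range (hP : ∀ x, P (P x) = P x) {ξ₁ ξ₂ : X} (h₁ : ξ₁ ∈ range P)
    (h₂ : ξ₂ ∈ range (ContinuousLinearMap.id ℝ X - P)) : P (ξ₁ - ξ₂) = ξ₁ := by
  obtain ⟨a, rfl⟩ := h₁
  obtain ⟨b, rfl⟩ := h₂
  simp [hP]

theorem unitSeparationSet_range_eq_image (hP : ∀ x, P (P x) = P x) :
    unitSeparationSet (range P) (range (ContinuousLinearMap.id ℝ X - P)) =
      (fun x => ‖x‖ / ‖P x‖) '' {x | P x ≠ 0} := by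
  ext d
  constructor
  · rintro ⟨ξ₁, ξ₂, h₁, hξ₁, h₂, rfl⟩
    have hPξ : P (ξ₁ - ξ₂) = ξ₁ := apply_sub_eq_of_mem_range hP h₁ h₂
    refine ⟨ξ₁ - ξ₂, ?_, ?_⟩
    · rw [mem_ofPred_eq, hPξ, ← norm_ne_zero_iff, hξ₁]
      exact one_ne_zero
    · simp [hPξ, hξ₁]
  · rintro ⟨x, hx, rfl⟩
    set c := ‖P x‖⁻¹
    refine ⟨c • P x, c • (P x - x), ⟨c • x, by simp⟩, norm_smul_inv_norm hx,
      ⟨-(c • x), by simp [smul_sub, neg_add_eq_sub]⟩, ?_⟩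
    rw [← smul_sub, sub_sub_cancel, norm_smul, Real.norm_of_nonneg (by positivity)]
    exact div_eq_inv_mul _ _

end Projection

theorem stmt_11_general (X : Type*) [NormedAddCommGroup X] [NormedSpace ℝ X]
    (P : X →L[ℝ] X) (hP : ∀ x, P (P x) = P x)
    (hP0 : P ≠ 0) :
    sInf {d : ℝ | ∃ ξ₁ ξ₂ : X, ξ₁ ∈ Set.range P ∧ ‖ξ₁‖ = 1 ∧
        ξ₂ ∈ Set.range (ContinuousLinearMap.id ℝ X - P) ∧ d = ‖ξ₁ - ξ₂‖}
      = 1 / ‖P‖ := by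
  rw [← unitSeparationSet, unitSeparationSet_range_eq_image hP,
    P.sInf_norm_div_norm_apply_eq_inv_opNorm hP0, one_div]

theorem stmt_11 (X : Type*) [NormedAddCommGroup X] [NormedSpace ℝ X] [CompleteSpace X]
    (P : X →L[ℝ] X) (hP : ∀ x, P (P x) = P x)
    (hP0 : P ≠ 0) (hP1 : ContinuousLinearMap.id ℝ X - P ≠ 0) :
    sInf {d : ℝ | ∃ ξ₁ ξ₂ : X, ξ₁ ∈ Set.range P ∧ ‖ξ₁‖ = 1 ∧
        ξ₂ ∈ Set.range (ContinuousLinearMap.id ℝ X - P) ∧ d = ‖ξ₁ - ξ₂‖}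
      = 1 / ‖P‖ :=
  stmt_11_general X P hP hP0
end

section
/- Let P₁ be a nonzero bounded projection on a Banach space X with I − P₁ nonzero, and let C₁, C₂ be the ranges of P₁ and I − P₁. Define the angular distance γ(C₁,C₂) = inf{ ‖ξ₁/‖ξ₁‖ − ξ₂/‖ξ₂‖ ‖ : ξ₁ ∈ C₁∖{0}, ξ₂ ∈ C₂∖{0} }. Then 1/γ(C₁,C₂) ≤ ‖P₁‖ ≤ 2/γ(C₁,C₂). -/
/-!
Write `n ξ` for `ξ / ‖ξ‖`. If `ξ₁ = P ξ₁` and `P ξ₂ = 0` then `P (n ξ₁ - n ξ₂) = n ξ₁` is a unit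
vector, so `1 ≤ ‖P‖ ‖n ξ₁ - n ξ₂‖`, which gives `1 / γ ≤ ‖P‖`. Conversely, `x` is the difference of
`P x ∈ C₁` and `P x - x ∈ C₂`, and `‖a‖ ‖n a - n b‖ ≤ 2 ‖a - b‖` for any vectors `a`, `b`; hence
`γ ‖P x‖ ≤ 2 ‖x‖`.
-/

section

open NormedSpace

variable {X : Type*} [NormedAddCommGroup X] [NormedSpace ℝ X]

lemma norm_normalize_le_one (x : X) : ‖normalize x‖ ≤ 1 := by
  by_cases hx : x = 0
  · simp [hx]
  · exact (norm_normalize hx).le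

lemma norm_normalize_sub_normalize_le_two (x y : X) : ‖normalize x - normalize y‖ ≤ 2 := by
  calc ‖normalize x - normalize y‖ ≤ ‖normalize x‖ + ‖normalize y‖ := norm_sub_le _ _
    _ ≤ 1 + 1 := add_le_add (norm_normalize_le_one x) (norm_normalize_le_one y)
    _ = 2 := one_add_one_eq_two

lemma norm_mul_norm_normalize_sub_normalize_le (x y : X) :
    ‖x‖ * ‖normalize x - normalize y‖ ≤ 2 * ‖x - y‖ := by
  have hdecomp : ‖x‖ • (normalize x - normalize y) = (x - y) + (‖y‖ - ‖x‖) • normalize y := by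
    rw [smul_sub, sub_smul, norm_smul_normalize, norm_smul_normalize]
    abel
  calc ‖x‖ * ‖normalize x - normalize y‖
      = ‖(x - y) + (‖y‖ - ‖x‖) • normalize y‖ := by
        rw [← hdecomp, norm_smul, norm_norm]
    _ ≤ ‖x - y‖ + |‖y‖ - ‖x‖| * ‖normalize y‖ := by
        rw [← Real.norm_eq_abs, ← norm_smul]
        exact norm_add_le _ _
    _ ≤ ‖x - y‖ + ‖x - y‖ * 1 := by
        gcongr
        · rw [norm_sub_rev]
          exact abs_norm_sub_norm_le y x
        · exact norm_normalize_le_one y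
    _ = 2 * ‖x - y‖ := by ring

def angularDistanceSet (C₁ C₂ : Set X) : Set ℝ :=
  {d : ℝ | ∃ ξ₁ ξ₂ : X, ξ₁ ∈ C₁ ∧ ξ₁ ≠ 0 ∧ ξ₂ ∈ C₂ ∧ ξ₂ ≠ 0 ∧ d = ‖normalize ξ₁ - normalize ξ₂‖}

/-- The angular distance `γ(C₁, C₂)`; it is `0` when `C₁` or `C₂` has no nonzero element. -/
noncomputable def angularDistance (C₁ C₂ : Set X) : ℝ :=
  sInf (angularDistanceSet C₁ C₂)

section AngularDistance

variable {C₁ C₂ : Set X} {ξ₁ ξ₂ : X}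

lemma angularDistance_le (h₁ : ξ₁ ∈ C₁) (h₁0 : ξ₁ ≠ 0) (h₂ : ξ₂ ∈ C₂) (h₂0 : ξ₂ ≠ 0) :
    angularDistance C₁ C₂ ≤ ‖normalize ξ₁ - normalize ξ₂‖ :=
  csInf_le ⟨0, by rintro d ⟨-, -, -, -, -, -, rfl⟩; positivity⟩ ⟨ξ₁, ξ₂, h₁, h₁0, h₂, h₂0, rfl⟩

lemma le_angularDistance {c : ℝ} (h₁ : ξ₁ ∈ C₁) (h₁0 : ξ₁ ≠ 0) (h₂ : ξ₂ ∈ C₂) (h₂0 : ξ₂ ≠ 0)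
    (h : ∀ η₁ ∈ C₁, η₁ ≠ 0 → ∀ η₂ ∈ C₂, η₂ ≠ 0 → c ≤ ‖normalize η₁ - normalize η₂‖) :
    c ≤ angularDistance C₁ C₂ :=
  le_csInf ⟨_, ξ₁, ξ₂, h₁, h₁0, h₂, h₂0, rfl⟩ <| by
    rintro d ⟨η₁, η₂, hη₁, hη₁0, hη₂, hη₂0, rfl⟩
    exact h η₁ hη₁ hη₁0 η₂ hη₂ hη₂0

lemma angularDistance_le_two : angularDistance C₁ C₂ ≤ 2 := by
  rcases (angularDistanceSet C₁ C₂).eq_empty_or_nonempty with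
    hempty | ⟨_, ξ₁, ξ₂, h₁, h₁0, h₂, h₂0, rfl⟩
  · rw [angularDistance, hempty, Real.sInf_empty]
    exact zero_le_two
  · exact (angularDistance_le h₁ h₁0 h₂ h₂0).trans (norm_normalize_sub_normalize_le_two ξ₁ ξ₂)

end AngularDistance

lemma ContinuousLinearMap.exists_mem_range_ne_zero {f : X →L[ℝ] X} (hf : f ≠ 0) :
    ∃ y ∈ Set.range f, y ≠ 0 := by
  obtain ⟨x, hx⟩ := DFunLike.ne_iff.1 hf
  exact ⟨f x, ⟨x, rfl⟩, hx⟩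

section Projection

variable {P : X →L[ℝ] X}

lemma one_le_opNorm_mul_norm_normalize_sub (hP : ∀ x, P (P x) = P x) {ξ₁ ξ₂ : X}
    (h₁ : ξ₁ ∈ Set.range P) (h₁0 : ξ₁ ≠ 0) (h₂ : ξ₂ ∈ Set.range (ContinuousLinearMap.id ℝ X - P)) :
    1 ≤ ‖P‖ * ‖normalize ξ₁ - normalize ξ₂‖ := by
  obtain ⟨a, rfl⟩ := h₁
  obtain ⟨b, rfl⟩ := h₂
  have hPξ : P (normalize (P a) - normalize ((ContinuousLinearMap.id ℝ X - P) b)) =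
      normalize (P a) := by
    rw [map_sub, NormedSpace.normalize, NormedSpace.normalize, map_smul, map_smul, hP, sub_apply,
      ContinuousLinearMap.id_apply, map_sub, hP, sub_self, smul_zero, sub_zero]
  calc (1 : ℝ) = ‖normalize (P a)‖ := (norm_normalize h₁0).symm
    _ = ‖P (normalize (P a) - normalize ((ContinuousLinearMap.id ℝ X - P) b))‖ := by rw [hPξ]
    _ ≤ _ := P.le_opNorm _

lemma inv_opNorm_le_angularDistance (hP : ∀ x, P (P x) = P x) (hP0 : P ≠ 0)
    (hP1 : ContinuousLinearMap.id ℝ X - P ≠ 0) :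
    ‖P‖⁻¹ ≤ angularDistance (Set.range P) (Set.range (ContinuousLinearMap.id ℝ X - P)) := by
  obtain ⟨ξ₁, h₁, h₁0⟩ := ContinuousLinearMap.exists_mem_range_ne_zero hP0
  obtain ⟨ξ₂, h₂, h₂0⟩ := ContinuousLinearMap.exists_mem_range_ne_zero hP1
  refine le_angularDistance h₁ h₁0 h₂ h₂0 fun η₁ hη₁ hη₁0 η₂ hη₂ _ => ?_
  rw [inv_le_iff_one_le_mul₀' (norm_pos_iff.2 hP0)]
  exact one_le_opNorm_mul_norm_normalize_sub hP hη₁ hη₁0 hη₂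

lemma angularDistance_mul_norm_apply_le (x : X) :
    angularDistance (Set.range P) (Set.range (ContinuousLinearMap.id ℝ X - P)) * ‖P x‖ ≤
      2 * ‖x‖ := by
  set γ := angularDistance (Set.range P) (Set.range (ContinuousLinearMap.id ℝ X - P))
  by_cases hPx : P x = 0
  · rw [hPx, norm_zero, mul_zero]
    positivity
  by_cases hfix : P x - x = 0
  · rw [sub_eq_zero.1 hfix]
    exact mul_le_mul_of_nonneg_right angularDistance_le_two (norm_nonneg x)
  have hmem : P x - x ∈ Set.range (ContinuousLinearMap.id ℝ X - P) :=
    ⟨-x, by simp only [map_neg, sub_apply, ContinuousLinearMap.id_apply]; abel⟩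
  calc γ * ‖P x‖ ≤ ‖normalize (P x) - normalize (P x - x)‖ * ‖P x‖ := by
        gcongr
        exact angularDistance_le ⟨x, rfl⟩ hPx hmem hfix
    _ ≤ 2 * ‖P x - (P x - x)‖ := by
        rw [mul_comm]
        exact norm_mul_norm_normalize_sub_normalize_le _ _
    _ = 2 * ‖x‖ := by rw [sub_sub_cancel]

end Projection

end

theorem stmt_12_general (X : Type*) [NormedAddCommGroup X] [NormedSpace ℝ X]
    (P : X →L[ℝ] X) (hP : ∀ x, P (P x) = P x)
    (hP0 : P ≠ 0) (hP1 : ContinuousLinearMap.id ℝ X - P ≠ 0)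
    (γ : ℝ)
    (hγ : γ = sInf {d : ℝ | ∃ ξ₁ ξ₂ : X, ξ₁ ∈ Set.range P ∧ ξ₁ ≠ 0 ∧
        ξ₂ ∈ Set.range (ContinuousLinearMap.id ℝ X - P) ∧ ξ₂ ≠ 0 ∧
        d = ‖‖ξ₁‖⁻¹ • ξ₁ - ‖ξ₂‖⁻¹ • ξ₂‖}) :
    1 / γ ≤ ‖P‖ ∧ ‖P‖ ≤ 2 / γ := by
  replace hγ : γ = angularDistance (Set.range P) (Set.range (ContinuousLinearMap.id ℝ X - P)) := hγ
  have hPpos : 0 < ‖P‖ := norm_pos_iff.2 hP0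
  have hlower : ‖P‖⁻¹ ≤ γ := hγ ▸ inv_opNorm_le_angularDistance hP hP0 hP1
  have hγpos : 0 < γ := (inv_pos.2 hPpos).trans_le hlower
  refine ⟨?_, P.opNorm_le_bound (by positivity) fun x => ?_⟩
  · rw [one_div]
    exact inv_le_of_inv_le₀ hPpos hlower
  · rw [div_mul_eq_mul_div, le_div_iff₀ hγpos, mul_comm]
    exact hγ ▸ angularDistance_mul_norm_apply_le x

theorem stmt_12 (X : Type*) [NormedAddCommGroup X] [NormedSpace ℝ X] [CompleteSpace X]
    (P : X →L[ℝ] X) (hP : ∀ x, P (P x) = P x)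
    (hP0 : P ≠ 0) (hP1 : ContinuousLinearMap.id ℝ X - P ≠ 0)
    (γ : ℝ)
    (hγ : γ = sInf {d : ℝ | ∃ ξ₁ ξ₂ : X, ξ₁ ∈ Set.range P ∧ ξ₁ ≠ 0 ∧
        ξ₂ ∈ Set.range (ContinuousLinearMap.id ℝ X - P) ∧ ξ₂ ≠ 0 ∧
        d = ‖‖ξ₁‖⁻¹ • ξ₁ - ‖ξ₂‖⁻¹ • ξ₂‖}) :
    1 / γ ≤ ‖P‖ ∧ ‖P‖ ≤ 2 / γ :=
  stmt_12_general X P hP hP0 hP1 γ hγ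
end

section
/- Fix M > 0 and ρ ∈ (0,1/2). For r ∈ (0, 1/(Me)) let λ_r be the unique zero of x ↦ Me^(rx) − x in (0,1/r), and define α_r = −λ_r, β_r = ρ·ln(r·λ_r)/r − λ_r, and K_{2,r} = −2·e^(2+r·λ_r)·(r·λ_r)^(1−2ρ)/(ρ·ln(r·λ_r)). Then as r → 0⁺: (a) α_r − β_r → +∞, (b) K_{2,r} → 0, and (c) β_r → −∞. -/
/-! Put `t r = r λ_r ∈ (0, 1)`. The fixed-point equation gives `λ_r = M e^t ≤ M e`, so `t r → 0⁺`
as `r → 0⁺`, whence `log t → -∞` and `ρ log t / r → -∞`. This gives (a) and (c), the latter because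
`λ_r > 0`. For (b), the numerator of `K_{2,r}` tends to `0` because `1 - 2ρ > 0`, while its
denominator tends to `-∞`. -/

open Real Filter Topology Set

lemma mul_le_of_mul_exp_eq {M r x : ℝ} (hM : 0 < M) (hr : 0 < r) (hrx : r * x < 1)
    (hx : M * exp (r * x) = x) : r * x ≤ r * (M * exp 1) := by
  gcongr
  rw [← hx]
  gcongr

lemma tendsto_mul_fixedPoint_nhdsGT_zero {M : ℝ} (hM : 0 < M) {lam : ℝ → ℝ}
    (hlam : ∀ r ∈ Ioo 0 (1 / (M * exp 1)),
      0 < lam r ∧ lam r < 1 / r ∧ M * exp (r * lam r) = lam r) :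
    Tendsto (fun r => r * lam r) (𝓝[Ioo 0 (1 / (M * exp 1))] 0) (𝓝[>] 0) := by
  have hmem : ∀ᶠ r in 𝓝[Ioo 0 (1 / (M * exp 1))] 0, r ∈ Ioo 0 (1 / (M * exp 1)) :=
    self_mem_nhdsWithin
  have hpos : ∀ᶠ r in 𝓝[Ioo 0 (1 / (M * exp 1))] 0, 0 < r * lam r := by
    filter_upwards [hmem] with r hr using mul_pos hr.1 (hlam r hr).1
  have hupper : Tendsto (fun r => r * (M * exp 1)) (𝓝[Ioo 0 (1 / (M * exp 1))] 0) (𝓝 0) := by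
    simpa using ((continuous_mul_const (M * exp 1)).tendsto 0).mono_left nhdsWithin_le_nhds
  refine tendsto_nhdsWithin_of_tendsto_nhds_of_eventually_within _
    (tendsto_of_tendsto_of_tendsto_of_le_of_le' tendsto_const_nhds hupper
      (hpos.mono fun _ h => h.le) ?_) hpos
  filter_upwards [hmem] with r hr
  obtain ⟨-, hlt, heq⟩ := hlam r hr
  refine mul_le_of_mul_exp_eq hM hr.1 ?_ heq
  simpa [hr.1.ne'] using mul_lt_mul_of_pos_left hlt hr.1

lemma tendsto_mul_log_div_atBot {ρ : ℝ} (hρ : 0 < ρ) {l : Filter ℝ} (hl : l ≤ 𝓝[>] 0)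
    {t : ℝ → ℝ} (ht : Tendsto t l (𝓝[>] 0)) :
    Tendsto (fun r => ρ * log (t r) / r) l atBot := by
  simp only [div_eq_mul_inv]
  exact ((tendsto_log_nhdsGT_zero.comp ht).const_mul_atBot hρ).atBot_mul_atTop₀
    (tendsto_inv_nhdsGT_zero.mono_left hl)

lemma tendsto_exp_mul_rpow_div_log_nhdsGT_zero {ρ : ℝ} (hρ0 : 0 < ρ) (hρ1 : ρ < 1 / 2) :
    Tendsto (fun t => -(2 * exp (2 + t) * t ^ (1 - 2 * ρ)) / (ρ * log t)) (𝓝[>] 0) (𝓝 0) := by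
  have hexp : 0 < 1 - 2 * ρ := by linarith
  have hnum : Tendsto (fun t : ℝ => -(2 * exp (2 + t) * t ^ (1 - 2 * ρ))) (𝓝 0) (𝓝 0) := by
    have hcont : Continuous fun t : ℝ => -(2 * exp (2 + t) * t ^ (1 - 2 * ρ)) := by
      fun_prop (disch := exact hexp.le)
    simpa [zero_rpow hexp.ne'] using hcont.tendsto 0
  exact (hnum.mono_left nhdsWithin_le_nhds).div_atBot
    (tendsto_log_nhdsGT_zero.const_mul_atBot hρ0)

theorem stmt_14 (M ρ : ℝ) (hM : 0 < M) (hρ0 : 0 < ρ) (hρ1 : ρ < 1 / 2)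
    (lam : ℝ → ℝ)
    (hlam : ∀ r ∈ Set.Ioo 0 (1 / (M * Real.exp 1)),
      0 < lam r ∧ lam r < 1 / r ∧ M * Real.exp (r * lam r) = lam r) :
    Tendsto (fun r => (-lam r) - (ρ * Real.log (r * lam r) / r - lam r))
        (nhdsWithin 0 (Set.Ioo 0 (1 / (M * Real.exp 1)))) atTop ∧
    Tendsto (fun r => -(2 * Real.exp (2 + r * lam r) * (r * lam r) ^ (1 - 2 * ρ))
          / (ρ * Real.log (r * lam r)))
        (nhdsWithin 0 (Set.Ioo 0 (1 / (M * Real.exp 1)))) (nhds 0) ∧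
    Tendsto (fun r => ρ * Real.log (r * lam r) / r - lam r)
        (nhdsWithin 0 (Set.Ioo 0 (1 / (M * Real.exp 1)))) atBot := by
  have ht := tendsto_mul_fixedPoint_nhdsGT_zero hM hlam
  have hlog := tendsto_mul_log_div_atBot hρ0 (nhdsWithin_mono _ Ioo_subset_Ioi_self) ht
  refine ⟨?_, (tendsto_exp_mul_rpow_div_log_nhdsGT_zero hρ0 hρ1).comp ht, ?_⟩
  · refine (tendsto_neg_atBot_atTop.comp hlog).congr fun r => ?_
    simp only [Function.comp_apply]
    ring
  · refine tendsto_atBot_mono' _ ?_ hlog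
    filter_upwards [self_mem_nhdsWithin] with r hr
    linarith [(hlam r hr).1]
end

section
/- Fix M > 0 and ρ ∈ (0,1/2). With λ_r, α_r = −λ_r, β_r = ρ·ln(r·λ_r)/r − λ_r as above, define γ_r = (M − β_r)/(α_r − β_r). Then γ_r > 1 for all r ∈ (0, 1/(Me)), and γ_r → 1 as r → 0⁺. -/
/-!
Since `α_r - β_r = -ρ log(rλ_r) / r > 0` (because `0 < rλ_r < 1`), `γ_r > 1` is equivalent to
`α_r < M`, i.e. `-λ_r < M`. Moreover `γ_r = 1 + (M r + rλ_r) / (-ρ log(rλ_r))`, and the bound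
`λ_r = M e^{rλ_r} ≤ M e` forces `rλ_r → 0⁺`, so the numerator tends to `0` while the denominator
tends to `+∞`.
-/

open Real Filter Topology Set

/-- The paper's `γ_r = (M - β_r) / (α_r - β_r)` with `λ_r` replaced by `l`. -/
noncomputable def gamma (M ρ r l : ℝ) : ℝ :=
  (M - (ρ * log (r * l) / r - l)) / (-l - (ρ * log (r * l) / r - l))

section Gamma

variable {M ρ r l : ℝ}

lemma one_lt_gamma (hr : 0 < r) (hρ : 0 < ρ) (hrl : 0 < r * l) (hrl1 : r * l < 1)
    (hlM : -l < M) : 1 < gamma M ρ r l := by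
  have hβ : ρ * log (r * l) / r < 0 :=
    div_neg_of_neg_of_pos (mul_neg_of_pos_of_neg hρ (log_neg hrl hrl1)) hr
  rw [gamma, one_lt_div (by linarith)]
  linarith

lemma gamma_eq_one_add (hr : r ≠ 0) (hρ : ρ ≠ 0) (hlog : log (r * l) ≠ 0) :
    gamma M ρ r l = 1 + (M * r + r * l) / -(ρ * log (r * l)) := by
  have hden : -l - (ρ * log (r * l) / r - l) = -(ρ * log (r * l)) / r := by ring
  rw [gamma, hden, div_div_eq_mul_div, one_add_div (neg_ne_zero.2 (mul_ne_zero hρ hlog))]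
  congr 1
  field_simp
  ring

end Gamma

lemma tendsto_div_neg_mul_log {α : Type*} {L : Filter α} {a u : α → ℝ} {ρ : ℝ} (hρ : 0 < ρ)
    (ha : Tendsto a L (𝓝 0)) (hu : Tendsto u L (𝓝[>] 0)) :
    Tendsto (fun x => a x / -(ρ * log (u x))) L (𝓝 0) :=
  ha.div_atTop <|
    tendsto_neg_atBot_atTop.comp ((tendsto_log_nhdsGT_zero.comp hu).const_mul_atBot hρ)

lemma tendsto_gamma {α : Type*} {L : Filter α} {r l : α → ℝ} {M ρ : ℝ} (hρ : 0 < ρ)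
    (hr : Tendsto r L (𝓝[≠] 0)) (hrl : Tendsto (fun x => r x * l x) L (𝓝[>] 0)) :
    Tendsto (fun x => gamma M ρ (r x) (l x)) L (𝓝 1) := by
  have hlog : ∀ᶠ x in L, log (r x * l x) ≠ 0 := by
    filter_upwards [hrl (Ioo_mem_nhdsGT zero_lt_one)] with x hx
    exact (log_neg hx.1 hx.2).ne
  have hgamma : (fun x => 1 + (M * r x + r x * l x) / -(ρ * log (r x * l x)))
      =ᶠ[L] fun x => gamma M ρ (r x) (l x) := by
    filter_upwards [hr self_mem_nhdsWithin, hlog] with x hx hx_log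
    exact (gamma_eq_one_add hx hρ.ne' hx_log).symm
  have hnum : Tendsto (fun x => M * r x + r x * l x) L (𝓝 0) := by
    simpa using ((tendsto_nhdsWithin_iff.1 hr).1.const_mul M).add (tendsto_nhdsWithin_iff.1 hrl).1
  simpa using (tendsto_const_nhds.add (tendsto_div_neg_mul_log hρ hnum hrl)).congr' hgamma

theorem stmt_15_general (M ρ : ℝ) (hM : 0 < M) (hρ0 : 0 < ρ)
    (lam : ℝ → ℝ)
    (hlam : ∀ r ∈ Set.Ioo 0 (1 / (M * Real.exp 1)),
      0 < lam r ∧ lam r < 1 / r ∧ M * Real.exp (r * lam r) = lam r) :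
    (∀ r ∈ Set.Ioo 0 (1 / (M * Real.exp 1)),
      1 < (M - (ρ * Real.log (r * lam r) / r - lam r))
            / ((-lam r) - (ρ * Real.log (r * lam r) / r - lam r))) ∧
    Tendsto (fun r => (M - (ρ * Real.log (r * lam r) / r - lam r))
            / ((-lam r) - (ρ * Real.log (r * lam r) / r - lam r)))
        (nhdsWithin 0 (Set.Ioo 0 (1 / (M * Real.exp 1)))) (nhds 1) := by
  set I := Ioo 0 (1 / (M * exp 1))
  have hbounds : ∀ r ∈ I, 0 < r * lam r ∧ r * lam r < 1 ∧ r * lam r ≤ M * exp 1 * r := by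
    intro r hr
    obtain ⟨hl, hl_lt, hl_eq⟩ := hlam r hr
    have hrl1 : r * lam r < 1 := by rwa [lt_div_iff₀ hr.1, mul_comm] at hl_lt
    have hl_le : lam r ≤ M * exp 1 := hl_eq ▸ by gcongr
    exact ⟨mul_pos hr.1 hl, hrl1, by nlinarith [hr.1]⟩
  have hrl : Tendsto (fun r => r * lam r) (𝓝[I] 0) (𝓝[>] 0) := by
    refine tendsto_nhdsWithin_iff.2
      ⟨?_, eventually_nhdsWithin_of_forall fun r hr => (hbounds r hr).1⟩
    refine squeeze_zero' (eventually_nhdsWithin_of_forall fun r hr => (hbounds r hr).1.le)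
      (eventually_nhdsWithin_of_forall fun r hr => (hbounds r hr).2.2) ?_
    exact tendsto_nhdsWithin_of_tendsto_nhds ((continuous_const_mul _).tendsto' 0 0 (mul_zero _))
  refine ⟨fun r hr => one_lt_gamma hr.1 hρ0 (hbounds r hr).1 (hbounds r hr).2.1
    (by linarith [(hlam r hr).1]), tendsto_gamma hρ0 ?_ hrl⟩
  exact tendsto_nhdsWithin_mono_right (fun r hr => hr.1.ne') tendsto_id

theorem stmt_15 (M ρ : ℝ) (hM : 0 < M) (hρ0 : 0 < ρ) (hρ1 : ρ < 1 / 2)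
    (lam : ℝ → ℝ)
    (hlam : ∀ r ∈ Set.Ioo 0 (1 / (M * Real.exp 1)),
      0 < lam r ∧ lam r < 1 / r ∧ M * Real.exp (r * lam r) = lam r) :
    (∀ r ∈ Set.Ioo 0 (1 / (M * Real.exp 1)),
      1 < (M - (ρ * Real.log (r * lam r) / r - lam r))
            / ((-lam r) - (ρ * Real.log (r * lam r) / r - lam r))) ∧
    Tendsto (fun r => (M - (ρ * Real.log (r * lam r) / r - lam r))
            / ((-lam r) - (ρ * Real.log (r * lam r) / r - lam r)))
        (nhdsWithin 0 (Set.Ioo 0 (1 / (M * Real.exp 1)))) (nhds 1) :=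
  stmt_15_general M ρ hM hρ0 lam hlam
end
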